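/- Let d be a positive integer. The entire function s ↦ ∏_{m=0}^{d−1} G((s+m)/d + 1) has, at each point s = −n for a natural number n, a zero of multiplicity exactly ⌊n/d⌋ (in particular, it is nonzero at s = −n when n < d), where ⌊x⌋ denotes the integer part of x. -/

import Mathlib

open Complex Real

/-- The infinite product defining the Barnes double Gamma function. -/
noncomputable def barnesProd (z : ℂ) : ℂ :=
  ∏' n : ℕ, (1 + z / (n + 1)) ^ (n + 1) * Complex.exp (-z + z ^ 2 / (2 * ((n : ℂ) + 1)))

/-- The Barnes double Gamma function: `barnesG1 z = G(z+1)`. -/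
noncomputable def barnesG1 (z : ℂ) : ℂ :=
  (2 * Real.pi : ℂ) ^ (z / 2) *
    Complex.exp (-(((1 + (Real.eulerMascheroniConstant : ℂ)) * z ^ 2 + z) / 2)) * barnesProd z

/-! ### Auxiliary definitions -/

noncomputable def bTerm (j : ℕ) (z : ℂ) : ℂ :=
  (1 + z / (j + 1)) ^ (j + 1) * Complex.exp (-z + z ^ 2 / (2 * ((j : ℂ) + 1)))

lemma barnesProd_eq_tprod (z : ℂ) : barnesProd z = ∏' j : ℕ, bTerm j z := rfl

noncomputable def bLog (j : ℕ) (z : ℂ) : ℂ :=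
  ((j : ℂ) + 1) * Complex.log (1 + z / ((j : ℂ) + 1)) + (-z + z ^ 2 / (2 * ((j : ℂ) + 1)))

noncomputable def bE (z : ℂ) : ℂ :=
  Complex.exp (Complex.log (2 * Real.pi) * (z / 2)) *
    Complex.exp (-(((1 + (Real.eulerMascheroniConstant : ℂ)) * z ^ 2 + z) / 2))

noncomputable def bX (N : ℕ) (w : ℂ) : ℂ :=
  ∏ j ∈ Finset.range N, Complex.exp (-w + w ^ 2 / (2 * ((j : ℂ) + 1)))

noncomputable def bA (N : ℕ) (w : ℂ) : ℂ := Complex.exp (∑' j : ℕ, bLog (j + N) w)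

noncomputable def bP (N : ℕ) (w : ℂ) : ℂ :=
  ∏ j ∈ Finset.range N, (1 + w / ((j : ℂ) + 1)) ^ (j + 1)

/-! ### Elementary estimates -/

lemma jc_ne (j : ℕ) : ((j : ℂ) + 1) ≠ 0 := by
  have := Nat.cast_add_one_ne_zero (R := ℂ) j
  exact_mod_cast this

lemma jc_pos (j : ℕ) : (0:ℝ) < (j : ℝ) + 1 := by positivity

lemma cubic_log_bound {w : ℂ} (hw : ‖w‖ ≤ 1/2) :
    ‖Complex.log (1 + w) - (w - w ^ 2 / 2)‖ ≤ ‖w‖ ^ 3 := by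
  have h1 : ‖w‖ < 1 := lt_of_le_of_lt hw (by norm_num)
  have h := Complex.norm_log_sub_logTaylor_le 2 h1
  have hT : Complex.logTaylor 3 w = w - w ^ 2 / 2 := by
    simp [Complex.logTaylor_succ, Complex.logTaylor_zero]
    ring
  rw [hT] at h
  refine h.trans ?_
  have h2 : (1 - ‖w‖)⁻¹ ≤ 2 := by
    rw [inv_le_comm₀ (by linarith) (by norm_num)]
    linarith
  have h3 : (0:ℝ) ≤ ‖w‖ ^ 3 := by positivity
  have h4 : ‖w‖ ^ 3 * (1 - ‖w‖)⁻¹ ≤ ‖w‖ ^ 3 * 2 := mul_le_mul_of_nonneg_left h2 h3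
  norm_num
  linarith

lemma bLog_eq (j : ℕ) (z : ℂ) :
    bLog j z = ((j : ℂ) + 1) * (Complex.log (1 + z / ((j : ℂ) + 1))
      - (z / ((j : ℂ) + 1) - (z / ((j : ℂ) + 1)) ^ 2 / 2)) := by
  have h := jc_ne j
  rw [bLog]
  field_simp
  ring

lemma norm_w (j : ℕ) (z : ℂ) : ‖z / ((j : ℂ) + 1)‖ = ‖z‖ / ((j:ℝ) + 1) := by
  rw [norm_div]
  norm_cast

lemma norm_bLog_le (j : ℕ) {z : ℂ} (hz : 2 * ‖z‖ ≤ (j : ℝ) + 1) :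
    ‖bLog j z‖ ≤ ‖z‖ ^ 3 / ((j : ℝ) + 1) ^ 2 := by
  have hj := jc_pos j
  have hw : ‖z / ((j : ℂ) + 1)‖ ≤ 1/2 := by
    rw [norm_w, div_le_div_iff₀ (jc_pos j) (by norm_num)]
    linarith
  rw [bLog_eq, norm_mul]
  have h1 : ‖((j : ℂ) + 1)‖ = (j : ℝ) + 1 := by
    norm_cast
  rw [h1]
  calc ((j:ℝ) + 1) * ‖Complex.log (1 + z / ((j : ℂ) + 1))
        - (z / ((j : ℂ) + 1) - (z / ((j : ℂ) + 1)) ^ 2 / 2)‖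
      ≤ ((j:ℝ) + 1) * ‖z / ((j : ℂ) + 1)‖ ^ 3 := by
        exact mul_le_mul_of_nonneg_left (cubic_log_bound hw) (by positivity)
    _ = ‖z‖ ^ 3 / ((j : ℝ) + 1) ^ 2 := by
        rw [norm_w]
        field_simp

lemma one_add_w_ne (j : ℕ) {z : ℂ} (hz : 2 * ‖z‖ ≤ (j : ℝ) + 1) :
    1 + z / ((j : ℂ) + 1) ≠ 0 := by
  intro h
  have h1 : ‖z / ((j : ℂ) + 1)‖ = 1 := by
    have : z / ((j : ℂ) + 1) = -1 := by linear_combination h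
    rw [this]; simp
  rw [norm_w] at h1
  have hj := jc_pos j
  rw [div_eq_one_iff_eq (by positivity)] at h1
  nlinarith [norm_nonneg z]

lemma shift_bound (N j : ℕ) {z : ℂ} (hz : 2 * ‖z‖ ≤ N) :
    2 * ‖z‖ ≤ ((j + N : ℕ) : ℝ) + 1 := by
  push_cast
  linarith [Nat.cast_nonneg (α := ℝ) j]

/-! ### Product splitting -/

lemma bTerm_eq_exp (j : ℕ) {z : ℂ} (hz : 2 * ‖z‖ ≤ (j : ℝ) + 1) :
    bTerm j z = Complex.exp (bLog j z) := by
  have h0 := one_add_w_ne j hz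
  have hc : ((j : ℂ) + 1) = ((j + 1 : ℕ) : ℂ) := by push_cast; ring
  have h0' : 1 + z / (((j + 1 : ℕ)) : ℂ) ≠ 0 := by rw [← hc]; exact h0
  have key : (1 + z / (((j + 1 : ℕ)) : ℂ)) ^ (j + 1)
      = Complex.exp (((j + 1 : ℕ) : ℂ) * Complex.log (1 + z / (((j + 1 : ℕ)) : ℂ))) := by
    rw [Complex.exp_nat_mul, Complex.exp_log h0']
  rw [bTerm, bLog, hc, key, ← Complex.exp_add]

lemma summable_aux (c : ℝ) : Summable (fun j : ℕ => c / ((j:ℝ) + 1) ^ 2) := by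
  have h : Summable (fun n : ℕ => 1 / ((n:ℝ)) ^ 2) := Real.summable_one_div_nat_pow.mpr one_lt_two
  have h2 : Summable (fun j : ℕ => 1 / ((j:ℝ) + 1) ^ 2) := by
    have := (summable_nat_add_iff (f := fun n : ℕ => 1 / ((n:ℝ)) ^ 2) 1).mpr h
    refine this.congr fun j => ?_
    push_cast
    ring
  have := h2.mul_left c
  refine this.congr fun j => ?_
  rw [mul_one_div]

lemma norm_bLog_shift_le (N j : ℕ) {z : ℂ} (hz : 2 * ‖z‖ ≤ N) {r : ℝ} (hr : ‖z‖ ≤ r) :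
    ‖bLog (j + N) z‖ ≤ r ^ 3 / ((j : ℝ) + 1) ^ 2 := by
  have hb : 2 * ‖z‖ ≤ ((j + N : ℕ) : ℝ) + 1 := shift_bound N j hz
  refine (norm_bLog_le _ hb).trans ?_
  have h2 : ((j:ℝ) + 1) ^ 2 ≤ (((j + N : ℕ) : ℝ) + 1) ^ 2 := by
    gcongr
    push_cast
    linarith [Nat.cast_nonneg (α := ℝ) N]
  have hr0 : (0:ℝ) ≤ r := (norm_nonneg z).trans hr
  gcongr

lemma summable_bLog (N : ℕ) {z : ℂ} (hz : 2 * ‖z‖ ≤ N) :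
    Summable (fun j : ℕ => bLog (j + N) z) := by
  apply Summable.of_norm_bounded (g := fun j : ℕ => ‖z‖ ^ 3 / ((j:ℝ) + 1) ^ 2) (summable_aux _)
  intro j
  exact norm_bLog_shift_le N j hz le_rfl

lemma barnesProd_split (N : ℕ) {z : ℂ} (hz : 2 * ‖z‖ ≤ N) :
    barnesProd z = (∏ j ∈ Finset.range N, bTerm j z) * bA N z := by
  have hsum : Summable (fun j : ℕ => bLog (j + N) z) := summable_bLog N hz
  have htail : HasProd (fun j : ℕ => bTerm (j + N) z)
      (Complex.exp (∑' j : ℕ, bLog (j + N) z)) := by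
    have h := hsum.hasSum.cexp
    refine h.congr_fun ?_
    intro j
    exact bTerm_eq_exp (j + N) (shift_bound N j hz)
  have hmul : Multipliable (fun j : ℕ => bTerm (j + N) z) := htail.multipliable
  have key := Multipliable.prod_mul_tprod_nat_mul' (f := fun j => bTerm j z) (k := N) hmul
  rw [barnesProd_eq_tprod, ← key, htail.tprod_eq, bA]

lemma two_pi_ne : (2 * (Real.pi : ℂ)) ≠ 0 := by
  have : (Real.pi : ℂ) ≠ 0 := Complex.ofReal_ne_zero.mpr Real.pi_ne_zero
  exact mul_ne_zero two_ne_zero this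

lemma barnesG1_split (N : ℕ) {w : ℂ} (hw : 2 * ‖w‖ ≤ N) :
    barnesG1 w = (bE w * bX N w * bA N w) * bP N w := by
  rw [barnesG1, Complex.cpow_def_of_ne_zero two_pi_ne, barnesProd_split N hw]
  have hsplit : (∏ j ∈ Finset.range N, bTerm j w) = bP N w * bX N w := by
    rw [bP, bX, ← Finset.prod_mul_distrib]
    rfl
  rw [hsplit, bE]
  ring

/-! ### Analyticity -/

lemma bLog_diffOn (j : ℕ) {U : Set ℂ} (hU : ∀ z ∈ U, 2 * ‖z‖ ≤ (j : ℝ) + 1) :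
    DifferentiableOn ℂ (bLog j) U := by
  intro z hz
  apply DifferentiableAt.differentiableWithinAt
  have hslit : 1 + z / ((j : ℂ) + 1) ∈ Complex.slitPlane := by
    rw [Complex.mem_slitPlane_iff]
    left
    have h1 : |(z / ((j : ℂ) + 1)).re| ≤ ‖z / ((j : ℂ) + 1)‖ := Complex.abs_re_le_norm _
    have h2 : ‖z / ((j : ℂ) + 1)‖ ≤ 1/2 := by
      rw [norm_w]
      have := hU z hz
      have hj : (0:ℝ) < (j:ℝ) + 1 := by positivity
      rw [div_le_div_iff₀ hj (by norm_num)]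
      linarith
    have h3 : (1 + z / ((j : ℂ) + 1)).re = 1 + (z / ((j : ℂ) + 1)).re := by simp
    rw [h3]
    have := abs_le.mp (h1.trans h2)
    linarith [this.1]
  have hd1 : DifferentiableAt ℂ (fun z : ℂ => Complex.log (1 + z / ((j : ℂ) + 1))) z :=
    DifferentiableAt.comp z (Complex.differentiableAt_log hslit) (by fun_prop)
  unfold bLog
  fun_prop

lemma tail_diffOn (N : ℕ) :
    DifferentiableOn ℂ (fun z : ℂ => ∑' j : ℕ, bLog (j + N) z) (Metric.ball 0 ((N:ℝ)/2)) := by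
  apply differentiableOn_tsum_of_summable_norm
    (u := fun j : ℕ => ((N:ℝ)/2) ^ 3 / ((j:ℝ) + 1) ^ 2)
  · exact summable_aux _
  · intro j
    apply bLog_diffOn
    intro z hz
    rw [Metric.mem_ball, dist_zero_right] at hz
    exact shift_bound N j (z := z) (by linarith)
  · exact Metric.isOpen_ball
  · intro j z hz
    rw [Metric.mem_ball, dist_zero_right] at hz
    exact norm_bLog_shift_le N j (by linarith) (le_of_lt hz)

lemma bA_analyticAt (N : ℕ) {w0 : ℂ} (hw : 2 * ‖w0‖ < N) : AnalyticAt ℂ (bA N) w0 := by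
  have h1 : AnalyticAt ℂ (fun z => ∑' j : ℕ, bLog (j + N) z) w0 := by
    apply (tail_diffOn N).analyticAt
    apply Metric.isOpen_ball.mem_nhds
    rw [Metric.mem_ball, dist_zero_right]
    linarith
  exact (Complex.differentiable_exp.analyticAt _).comp h1

lemma bE_analyticAt (w0 : ℂ) : AnalyticAt ℂ bE w0 := by
  apply Differentiable.analyticAt
  unfold bE
  fun_prop

lemma bX_analyticAt (N : ℕ) (w0 : ℂ) : AnalyticAt ℂ (bX N) w0 := by
  apply Differentiable.analyticAt
  unfold bX
  apply Differentiable.fun_finsetProd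
  intro j _
  fun_prop

lemma bE_ne (w : ℂ) : bE w ≠ 0 := mul_ne_zero (Complex.exp_ne_zero _) (Complex.exp_ne_zero _)

lemma bX_ne (N : ℕ) (w : ℂ) : bX N w ≠ 0 :=
  Finset.prod_ne_zero_iff.mpr fun j _ => Complex.exp_ne_zero _

lemma bA_ne (N : ℕ) (w : ℂ) : bA N w ≠ 0 := Complex.exp_ne_zero _

/-! ### Nonvanishing of polynomial factors -/

lemma factor_ne {d n m j : ℕ} (hd : 0 < d) (hne : n ≠ m + d * (j + 1)) :
    1 + ((-(n:ℂ)) + m) / ((d:ℂ) * ((j:ℂ) + 1)) ≠ 0 := by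
  have hden : (d:ℂ) * ((j:ℂ) + 1) ≠ 0 :=
    mul_ne_zero (Nat.cast_ne_zero.mpr hd.ne') (jc_ne j)
  intro h
  apply hne
  have h2 : (n : ℂ) = (m : ℂ) + (d:ℂ) * ((j:ℂ) + 1) := by
    have e : (1 + ((-(n:ℂ)) + m) / ((d:ℂ) * ((j:ℂ) + 1))) * ((d:ℂ) * ((j:ℂ) + 1))
        = (d:ℂ) * ((j:ℂ) + 1) + ((-(n:ℂ)) + m) := by
      rw [add_mul, one_mul, div_mul_cancel₀ _ hden]
    rw [h, zero_mul] at e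
    linear_combination e
  exact_mod_cast h2

lemma bP_def (N : ℕ) (w : ℂ) : bP N w = ∏ j ∈ Finset.range N, (1 + w / ((j : ℂ) + 1)) ^ (j + 1) := rfl

lemma affine_analyticAt (d m : ℕ) (hd : 0 < d) (s0 : ℂ) :
    AnalyticAt ℂ (fun s : ℂ => (s + m) / d) s0 := by
  apply AnalyticAt.div (analyticAt_id.add analyticAt_const) analyticAt_const
  exact Nat.cast_ne_zero.mpr hd.ne'

lemma main_bound {d n : ℕ} (hd : 0 < d) {s : ℂ} (hs : ‖s + n‖ < 1) {m : ℕ} (hm : m < d) :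
    2 * ‖(s + m) / (d:ℂ)‖ < ((2 * (n + d + 2) : ℕ) : ℝ) := by
  have hdR : (1:ℝ) ≤ d := by exact_mod_cast hd
  have hmd : (m:ℝ) ≤ d := by exact_mod_cast hm.le
  have hnorm : ‖(s + m : ℂ)‖ ≤ ‖s + n‖ + ((n:ℝ) + m) := by
    have he : (s + m : ℂ) = (s + n) + ((m:ℂ) - n) := by ring
    rw [he]
    refine (norm_add_le _ _).trans ?_
    gcongr
    have he2 : ((m:ℂ) - n) = (((m:ℝ) - n : ℝ) : ℂ) := by push_cast; ring
    rw [he2, Complex.norm_real, Real.norm_eq_abs]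
    have h0 : (0:ℝ) ≤ m := Nat.cast_nonneg m
    have h1 : (0:ℝ) ≤ n := Nat.cast_nonneg n
    exact abs_le.mpr ⟨by linarith, by linarith⟩
  have hds : ‖(s + m) / (d:ℂ)‖ = ‖s + (m:ℂ)‖ / d := by
    rw [norm_div]
    norm_cast
  have hdiv : ‖s + (m:ℂ)‖ / (d:ℝ) ≤ ‖s + (m:ℂ)‖ := div_le_self (norm_nonneg _) hdR
  have h1 : (0:ℝ) ≤ n := Nat.cast_nonneg n
  rw [hds]
  push_cast
  nlinarith

/-- For a positive integer `d`, the entire function `s ↦ ∏_{m=0}^{d−1} G((s+m)/d + 1)` has at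
each point `s = −n`, `n ∈ ℕ`, a zero of multiplicity exactly `⌊n/d⌋` (in particular it is
nonzero at `s = −n` when `n < d`). -/
theorem barnesG_elliptic_factor_zeros (d : ℕ) (hd : 0 < d) :
    ∀ n : ℕ, ∃ g : ℂ → ℂ, AnalyticAt ℂ g (-(n : ℂ)) ∧ g (-(n : ℂ)) ≠ 0 ∧
      ∀ᶠ s in nhds (-(n : ℂ)),
        (∏ m ∈ Finset.range d, barnesG1 ((s + m) / d)) = (s + n) ^ (n / d) * g s := by
  intro n
  classical
  set N : ℕ := 2 * (n + d + 2) with hN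
  have hdC : (d:ℂ) ≠ 0 := Nat.cast_ne_zero.mpr hd.ne'
  set F1 : ℂ → ℂ := fun s =>
    ∏ m ∈ Finset.range d, (bE ((s + m) / d) * bX N ((s + m) / d) * bA N ((s + m) / d)) with hF1
  have hsn0 : ‖(-(n:ℂ)) + n‖ < 1 := by simp
  have hF1_an : AnalyticAt ℂ F1 (-(n:ℂ)) := by
    apply Finset.analyticAt_fun_prod
    intro m hm
    rw [Finset.mem_range] at hm
    have haff : AnalyticAt ℂ (fun s : ℂ => (s + m) / d) (-(n:ℂ)) := affine_analyticAt d m hd _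
    refine AnalyticAt.mul (AnalyticAt.mul ?_ ?_) ?_
    · exact (bE_analyticAt _).comp haff
    · exact (bX_analyticAt N _).comp haff
    · have h3 : AnalyticAt ℂ (bA N) ((-(n:ℂ) + m) / d) := bA_analyticAt N (main_bound hd hsn0 hm)
      exact AnalyticAt.comp (f := fun s : ℂ => (s + (m:ℂ)) / d) (x := -(n:ℂ)) h3 haff
  have hF1_ne : F1 (-(n:ℂ)) ≠ 0 := by
    apply Finset.prod_ne_zero_iff.mpr
    intro m _
    exact mul_ne_zero (mul_ne_zero (bE_ne _) (bX_ne _ _)) (bA_ne _ _)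
  have hfac_an : ∀ S : Finset (ℕ × ℕ),
      AnalyticAt ℂ
        (fun s : ℂ => ∏ p ∈ S, (1 + (s + p.1) / ((d:ℂ) * ((p.2:ℂ) + 1))) ^ (p.2 + 1))
        (-(n:ℂ)) := by
    intro S
    apply Finset.analyticAt_fun_prod
    intro p _
    apply AnalyticAt.pow
    apply AnalyticAt.add analyticAt_const
    apply AnalyticAt.div (analyticAt_id.add analyticAt_const) analyticAt_const
    exact mul_ne_zero hdC (jc_ne p.2)
  have hprod : ∀ s : ℂ, ‖s + n‖ < 1 →
      (∏ m ∈ Finset.range d, barnesG1 ((s + m) / d))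
        = F1 s * ∏ p ∈ Finset.range d ×ˢ Finset.range N,
            (1 + (s + p.1) / ((d:ℂ) * ((p.2:ℂ) + 1))) ^ (p.2 + 1) := by
    intro s hs
    have h1 : ∀ m ∈ Finset.range d, barnesG1 ((s + m) / d)
        = (bE ((s+m)/d) * bX N ((s+m)/d) * bA N ((s+m)/d)) * bP N ((s+m)/d) := by
      intro m hm
      rw [Finset.mem_range] at hm
      exact barnesG1_split N (le_of_lt (main_bound hd hs hm))
    rw [Finset.prod_congr rfl h1, Finset.prod_mul_distrib]
    congr 1
    rw [Finset.prod_product' (Finset.range d) (Finset.range N)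
      (fun (m j : ℕ) => (1 + (s + (m:ℂ)) / ((d:ℂ) * ((j:ℂ) + 1))) ^ (j + 1))]
    apply Finset.prod_congr rfl
    intro m _
    rw [bP_def]
    apply Finset.prod_congr rfl
    intro j _
    rw [div_div]
  have hball : ∀ s : ℂ, s ∈ Metric.ball (-(n:ℂ)) 1 → ‖s + n‖ < 1 := by
    intro s hs
    rw [Metric.mem_ball, dist_eq_norm, sub_neg_eq_add] at hs
    exact hs
  by_cases hK0 : n / d = 0
  · -- n < d : no zero
    have hnd : n < d := (Nat.div_eq_zero_iff_lt hd).mp hK0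
    refine ⟨fun s => F1 s * ∏ p ∈ Finset.range d ×ˢ Finset.range N,
        (1 + (s + p.1) / ((d:ℂ) * ((p.2:ℂ) + 1))) ^ (p.2 + 1), ?_, ?_, ?_⟩
    · exact hF1_an.mul (hfac_an _)
    · refine mul_ne_zero hF1_ne (Finset.prod_ne_zero_iff.mpr fun p _ => pow_ne_zero _ ?_)
      refine factor_ne hd ?_
      have h2 : d ≤ d * (p.2 + 1) := Nat.le_mul_of_pos_right d (Nat.succ_pos _)
      omega
    · filter_upwards [Metric.ball_mem_nhds _ one_pos] with s hs
      rw [hprod s (hball s hs), hK0, pow_zero, one_mul]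
  · -- n ≥ d : zero of order K = n / d
    have hKpos : 0 < n / d := Nat.pos_of_ne_zero hK0
    obtain ⟨K', hK'⟩ : ∃ K', n / d = K' + 1 := ⟨n / d - 1, (Nat.succ_pred_eq_of_pos hKpos).symm⟩
    have hmem : (n % d, K') ∈ Finset.range d ×ˢ Finset.range N := by
      rw [Finset.mem_product, Finset.mem_range, Finset.mem_range]
      constructor
      · exact Nat.mod_lt n hd
      · have h1 : n / d ≤ n := Nat.div_le_self n d
        omega
    have hdkC : ((d:ℂ) * ((K':ℂ) + 1)) ≠ 0 := mul_ne_zero hdC (jc_ne K')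
    refine ⟨fun s => F1 s * (((d:ℂ) * ((K':ℂ) + 1))⁻¹ ^ (K' + 1) *
        ∏ p ∈ (Finset.range d ×ˢ Finset.range N).erase (n % d, K'),
          (1 + (s + p.1) / ((d:ℂ) * ((p.2:ℂ) + 1))) ^ (p.2 + 1)), ?_, ?_, ?_⟩
    · exact hF1_an.mul (analyticAt_const.mul (hfac_an _))
    · refine mul_ne_zero hF1_ne (mul_ne_zero (pow_ne_zero _ (inv_ne_zero hdkC)) ?_)
      refine Finset.prod_ne_zero_iff.mpr fun p hp => pow_ne_zero _ ?_
      obtain ⟨p1, p2⟩ := p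
      refine factor_ne hd ?_
      intro heq
      have hp1 : p1 < d := by
        have := (Finset.mem_product.mp (Finset.mem_of_mem_erase hp)).1
        rwa [Finset.mem_range] at this
      have e1 : n % d = p1 := by
        rw [heq, Nat.add_mul_mod_self_left, Nat.mod_eq_of_lt hp1]
      have e2 : n / d = p2 + 1 := by
        rw [heq, Nat.add_mul_div_left _ _ hd, Nat.div_eq_of_lt hp1, zero_add]
      exact Finset.ne_of_mem_erase hp (by rw [Prod.mk.injEq]; exact ⟨e1.symm, by omega⟩)
    · filter_upwards [Metric.ball_mem_nhds _ one_pos] with s hs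
      rw [hprod s (hball s hs), ← Finset.mul_prod_erase _ _ hmem]
      have hdk : (d:ℂ) * ((K':ℂ) + 1) + (n % d : ℕ) = (n:ℂ) := by
        have h1 : d * (K' + 1) + n % d = n := by
          rw [← hK']
          exact Nat.div_add_mod n d
        have h2 := congrArg (Nat.cast : ℕ → ℂ) h1
        push_cast at h2
        linear_combination h2
      have hpoint : (1 + (s + ((n % d : ℕ) : ℂ)) / ((d:ℂ) * ((K':ℂ) + 1)))
          = (s + n) * ((d:ℂ) * ((K':ℂ) + 1))⁻¹ := by
        field_simp
        linear_combination hdk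
      simp only
      rw [hK', hpoint, mul_pow]
      ring
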